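/- Let φ ∈ ℝ be a fixed parameter. For each integer n define on the open set Ω = {(t,x) ∈ ℝ² : x ≠ 0} the vector field L_n = e^{-nt+(n−1)x} (e^{x} − 1)^{−(n+2)} [ (−1 + Σ_{j=1}^{|n|−1} (2j+1)) n + (2n+1) e^{x} − (n+2) e^{2x} + e^{3x} + sgn(n) (φ/2) Σ_{j=1}^{|n|−1} j(j+1) ] ∂_t + e^{-nt+(n−1)x} (e^{x} − 1)^{−(n+1)} [ −(−1 + Σ_{j=1}^{|n|−1} (2j+1)) n − 2n e^{x} + n e^{2x} − sgn(n) (φ/2) Σ_{j=1}^{|n|−1} j(j+1) ] ∂_x, where the sums are empty (equal to 0) when |n| ≤ 1 and the exponents −(n+2), −(n+1) are integer powers. Then for all integers m, n one has [L_m, L_n] = (m − n) L_{m+n} at every point of Ω. (Realization 𝔚₉ of the Witt algebra from Theorem 1, with φ constant.) -/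

import Mathlib

noncomputable section

/-- Partial derivative of `f : ℝ² → ℝ` (curried) in the first variable `t`. -/
def qt (f : ℝ → ℝ → ℝ) (t x : ℝ) : ℝ := deriv (fun s => f s x) t

/-- Partial derivative in the second variable `x`. -/
def qx (f : ℝ → ℝ → ℝ) (t x : ℝ) : ℝ := deriv (fun s => f t s) x

/-- A vector field `τ ∂_t + ξ ∂_x` on ℝ² with coordinates `(t,x)`. -/
structure VF2 where
  tau : ℝ → ℝ → ℝ
  xi  : ℝ → ℝ → ℝ

/-- Action of a vector field on a function: `X(F) = τ F_t + ξ F_x`. -/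
def VF2.app (X : VF2) (F : ℝ → ℝ → ℝ) (t x : ℝ) : ℝ :=
  X.tau t x * qt F t x + X.xi t x * qx F t x

/-- Lie bracket of vector fields on ℝ². -/
def VF2.bracket (X Y : VF2) : VF2 where
  tau := fun t x => X.app Y.tau t x - Y.app X.tau t x
  xi  := fun t x => X.app Y.xi t x - Y.app X.xi t x

/-- Scalar multiple of a vector field. -/
def VF2.smul (c : ℝ) (X : VF2) : VF2 where
  tau := fun t x => c * X.tau t x
  xi  := fun t x => c * X.xi t x

/-- `Σ_{j=1}^{|n|-1} (2j+1)` (the empty sum `0` when `|n| ≤ 1`). -/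
def S1 (n : ℤ) : ℝ := ∑ j ∈ Finset.Icc 1 (n.natAbs - 1), (2 * (j : ℝ) + 1)

/-- `Σ_{j=1}^{|n|-1} j(j+1)` (the empty sum `0` when `|n| ≤ 1`). -/
def S2 (n : ℤ) : ℝ := ∑ j ∈ Finset.Icc 1 (n.natAbs - 1), ((j : ℝ) * ((j : ℝ) + 1))

/-- The vector fields of the realization 𝔚₉ (with constant parameter `φ`),
defined on `Ω = {(t,x) : x ≠ 0}`. -/
def W9 (φ : ℝ) (n : ℤ) : VF2 where
  tau := fun t x => Real.exp (-(n : ℝ) * t + ((n : ℝ) - 1) * x) *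
    (Real.exp x - 1) ^ (-(n + 2) : ℤ) *
    ((-1 + S1 n) * (n : ℝ) + (2 * (n : ℝ) + 1) * Real.exp x
      - ((n : ℝ) + 2) * Real.exp (2 * x) + Real.exp (3 * x)
      + (Int.sign n : ℝ) * (φ / 2) * S2 n)
  xi  := fun t x => Real.exp (-(n : ℝ) * t + ((n : ℝ) - 1) * x) *
    (Real.exp x - 1) ^ (-(n + 1) : ℤ) *
    (-((-1 + S1 n) * (n : ℝ)) - 2 * (n : ℝ) * Real.exp x
      + (n : ℝ) * Real.exp (2 * x)
      - (Int.sign n : ℝ) * (φ / 2) * S2 n)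

/-!
In the coordinate `s = 1/(eˣ - 1)`, for which `ds/dx = -s(s+1)`, the closed forms
`∑ (2j+1) = n² - 1` and `∑ j(j+1) = (|n|³ - |n|)/3` turn the fields into
`L_n = e^{-nt} (s+1)^{n-1} ((1 - (n-1)s + B_n s³) ∂_t + (n - B_n s²) ∂_x)` with
`B_n = (1 + φ/6)(n³ - n)`. Both components of `[L_m, L_n] - (m - n) L_{m+n}` then carry the
factor `e^{-(m+n)t} (s+1)^{m+n-2}`, and what is left is a polynomial identity in `s, m, n, φ`.
-/

open Filter Topology Real

theorem sum_Icc_two_mul_add_one {R : Type*} [CommRing R] (k : ℕ) :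
    ∑ j ∈ Finset.Icc 1 k, (2 * (j : R) + 1) = ((k : R) + 1) ^ 2 - 1 := by
  induction k with
  | zero => simp
  | succ k ih =>
    rw [Finset.sum_Icc_succ_top (by omega), ih]
    push_cast; ring

theorem three_mul_sum_Icc_mul_add_one {R : Type*} [CommRing R] (k : ℕ) :
    3 * ∑ j ∈ Finset.Icc 1 k, ((j : R) * ((j : R) + 1)) = k * (k + 1) * (k + 2) := by
  induction k with
  | zero => simp
  | succ k ih =>
    rw [Finset.sum_Icc_succ_top (by omega), mul_add, ih]
    push_cast; ring

def IsSeparatedNear (F : ℝ → ℝ → ℝ) (a : ℝ) (f : ℝ → ℝ) (x₀ : ℝ) : Prop :=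
  ∀ᶠ x in 𝓝 x₀, ∀ t, F t x = exp (a * t) * f x

namespace IsSeparatedNear

variable {F : ℝ → ℝ → ℝ} {a : ℝ} {f : ℝ → ℝ} {x₀ : ℝ}

theorem qt_eq (hF : IsSeparatedNear F a f x₀) (t : ℝ) :
    qt F t x₀ = a * exp (a * t) * f x₀ := by
  have hline : (fun s => F s x₀) = fun s => exp (a * s) * f x₀ := funext hF.self_of_nhds
  have hderiv : HasDerivAt (fun s => exp (a * s) * f x₀) (a * exp (a * t) * f x₀) t := by
    refine ((((hasDerivAt_id t).const_mul a).exp).mul_const (f x₀)).congr_deriv ?_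
    simp only [id, mul_one]; ring
  rw [qt, hline, hderiv.deriv]

theorem qx_eq (hF : IsSeparatedNear F a f x₀) (t : ℝ) :
    qx F t x₀ = exp (a * t) * deriv f x₀ := by
  have hnear : (fun s => F t s) =ᶠ[𝓝 x₀] fun s => exp (a * t) * f s :=
    hF.mono fun x hx => hx t
  rw [qx, hnear.deriv_eq, deriv_const_mul_field']

end IsSeparatedNear

theorem VF2.app_eq_of_isSeparatedNear {X : VF2} {F : ℝ → ℝ → ℝ} {a b x₀ : ℝ}
    {f g h : ℝ → ℝ} (hτ : IsSeparatedNear X.tau a f x₀) (hξ : IsSeparatedNear X.xi a g x₀)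
    (hF : IsSeparatedNear F b h x₀) (t : ℝ) :
    X.app F t x₀ = exp (a * t) * exp (b * t) * (b * f x₀ * h x₀ + g x₀ * deriv h x₀) := by
  rw [VF2.app, hF.qt_eq, hF.qx_eq, hτ.self_of_nhds, hξ.self_of_nhds]
  ring

def expSubOneInv (x : ℝ) : ℝ := (exp x - 1)⁻¹

theorem Real.exp_two_mul (y : ℝ) : exp (2 * y) = exp y ^ 2 := by rw [← exp_nat_mul]; norm_num

theorem Real.exp_three_mul (y : ℝ) : exp (3 * y) = exp y ^ 3 := by rw [← exp_nat_mul]; norm_num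

theorem exp_sub_one_ne_zero {x : ℝ} (hx : x ≠ 0) : exp x - 1 ≠ 0 :=
  sub_ne_zero.mpr fun h => hx (exp_eq_one_iff x |>.mp h)

theorem expSubOneInv_add_one {x : ℝ} (hx : x ≠ 0) :
    expSubOneInv x + 1 = exp x * expSubOneInv x := by
  have := exp_sub_one_ne_zero hx
  unfold expSubOneInv; field_simp; ring

theorem expSubOneInv_add_one_ne_zero {x : ℝ} (hx : x ≠ 0) : expSubOneInv x + 1 ≠ 0 := by
  rw [expSubOneInv_add_one hx]
  exact mul_ne_zero (exp_ne_zero x) (inv_ne_zero (exp_sub_one_ne_zero hx))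

theorem hasDerivAt_expSubOneInv {x : ℝ} (hx : x ≠ 0) :
    HasDerivAt expSubOneInv (-expSubOneInv x * (expSubOneInv x + 1)) x := by
  have hw := exp_sub_one_ne_zero hx
  refine (((hasDerivAt_exp x).sub_const 1).inv hw).congr_deriv ?_
  rw [expSubOneInv_add_one hx, expSubOneInv]
  field_simp

def profile (k : ℤ) (p : ℝ → ℝ) (x : ℝ) : ℝ := (expSubOneInv x + 1) ^ k * p (expSubOneInv x)

theorem hasDerivAt_profile (k : ℤ) {p : ℝ → ℝ} {p' x : ℝ} (hx : x ≠ 0)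
    (hp : HasDerivAt p p' (expSubOneInv x)) :
    HasDerivAt (profile k p)
      (-expSubOneInv x * (expSubOneInv x + 1) ^ k *
        (k * p (expSubOneInv x) + (expSubOneInv x + 1) * p')) x := by
  have hr := expSubOneInv_add_one_ne_zero hx
  have hs := hasDerivAt_expSubOneInv hx
  have hpow := (hasDerivAt_zpow k _ (Or.inl hr)).comp x (hs.add_const 1)
  refine (hpow.mul (hp.comp x hs)).congr_deriv ?_
  simp only [Function.comp_apply]
  generalize expSubOneInv x = s at hr ⊢
  rw [show (s + 1) ^ k = (s + 1) ^ (k - 1) * (s + 1) by rw [← zpow_add_one₀ hr, sub_add_cancel]]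
  ring

namespace W9

def coeff (φ : ℝ) (n : ℤ) : ℝ := (1 + φ / 6) * ((n : ℝ) ^ 3 - n)

def tauPoly (φ : ℝ) (n : ℤ) (s : ℝ) : ℝ := 1 - ((n : ℝ) - 1) * s + coeff φ n * s ^ 3

def xiPoly (φ : ℝ) (n : ℤ) (s : ℝ) : ℝ := n - coeff φ n * s ^ 2

def tauProfile (φ : ℝ) (n : ℤ) : ℝ → ℝ := profile (n - 1) (tauPoly φ n)

def xiProfile (φ : ℝ) (n : ℤ) : ℝ → ℝ := profile (n - 1) (xiPoly φ n)

theorem coeff_eq (φ : ℝ) (n : ℤ) :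
    coeff φ n = (-1 + S1 n) * n + Int.sign n * (φ / 2) * S2 n + n := by
  rcases eq_or_ne n 0 with rfl | hn
  · simp [S1, S2, coeff]
  have hsign : (Int.sign n : ℝ) * |(n : ℝ)| = n := by
    exact_mod_cast Int.sign_mul_abs n
  have hk : ((n.natAbs - 1 : ℕ) : ℝ) = |(n : ℝ)| - 1 := by
    rw [Nat.cast_sub (Int.natAbs_pos.mpr hn), Nat.cast_natAbs, Int.cast_abs, Nat.cast_one]
  have h1 : S1 n = |(n : ℝ)| ^ 2 - 1 := by rw [S1, sum_Icc_two_mul_add_one, hk]; ring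
  have h2 : 3 * S2 n = (|(n : ℝ)| - 1) * |(n : ℝ)| * (|(n : ℝ)| + 1) := by
    rw [S2, three_mul_sum_Icc_mul_add_one, hk]; ring
  rw [h1, sq_abs, coeff]
  linear_combination -(Int.sign n * (φ / 6)) * h2 - (φ / 6) * (|(n : ℝ)| ^ 2 - 1) * hsign
    - (φ / 6 * n) * sq_abs (n : ℝ)

theorem hasDerivAt_tauPoly (φ : ℝ) (n : ℤ) (s : ℝ) :
    HasDerivAt (tauPoly φ n) (3 * coeff φ n * s ^ 2 - (n - 1)) s := by
  refine ((((hasDerivAt_id s).const_mul _).const_sub 1).add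
    ((hasDerivAt_pow 3 s).const_mul (coeff φ n))).congr_deriv ?_
  push_cast; ring

theorem hasDerivAt_xiPoly (φ : ℝ) (n : ℤ) (s : ℝ) :
    HasDerivAt (xiPoly φ n) (-(2 * coeff φ n * s)) s := by
  refine (((hasDerivAt_pow 2 s).const_mul (coeff φ n)).const_sub _).congr_deriv ?_
  push_cast; ring

theorem prefactor_eq {y : ℝ} (hy : y ≠ 0) (n j : ℤ) (t : ℝ) :
    exp (-(n : ℝ) * t + ((n : ℝ) - 1) * y) * (exp y - 1) ^ (-(n + j)) =
      exp (-n * t) * (expSubOneInv y + 1) ^ (n - 1) * (exp y - 1) ^ (-(j + 1)) := by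
  have hw := exp_sub_one_ne_zero hy
  have hexp : exp (((n : ℝ) - 1) * y) = exp y ^ (n - 1) := by
    rw [show ((n : ℝ) - 1) * y = y * ((n - 1 : ℤ) : ℝ) by push_cast; ring, exp_mul, rpow_intCast]
  have hsplit :
      (exp y - 1) ^ (-(n + j)) = (exp y - 1) ^ (-(n - 1)) * (exp y - 1) ^ (-(j + 1)) := by
    rw [← zpow_add₀ hw]; ring_nf
  rw [exp_add, hexp, hsplit, expSubOneInv_add_one hy, expSubOneInv, mul_zpow, inv_zpow', neg_sub]
  ring

theorem tau_eq {y : ℝ} (hy : y ≠ 0) (φ : ℝ) (n : ℤ) (t : ℝ) :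
    (W9 φ n).tau t y = exp (-n * t) * tauProfile φ n y := by
  have hw := exp_sub_one_ne_zero hy
  have hpoly : (exp y - 1) ^ (-(2 + 1) : ℤ) *
      ((-1 + S1 n) * n + (2 * n + 1) * exp y - (n + 2) * exp (2 * y) + exp (3 * y)
        + Int.sign n * (φ / 2) * S2 n) = tauPoly φ n (expSubOneInv y) := by
    rw [show (-(2 + 1) : ℤ) = -(3 : ℕ) by norm_num, zpow_neg, zpow_natCast, tauPoly, coeff_eq,
      expSubOneInv, exp_two_mul, exp_three_mul]
    field_simp
    ring
  simp only [W9]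
  rw [prefactor_eq hy n 2, mul_assoc, hpoly, mul_assoc]; rfl

theorem xi_eq {y : ℝ} (hy : y ≠ 0) (φ : ℝ) (n : ℤ) (t : ℝ) :
    (W9 φ n).xi t y = exp (-n * t) * xiProfile φ n y := by
  have hw := exp_sub_one_ne_zero hy
  have hpoly : (exp y - 1) ^ (-(1 + 1) : ℤ) *
      (-((-1 + S1 n) * n) - 2 * n * exp y + n * exp (2 * y) - Int.sign n * (φ / 2) * S2 n)
      = xiPoly φ n (expSubOneInv y) := by
    rw [show (-(1 + 1) : ℤ) = -(2 : ℕ) by norm_num, zpow_neg, zpow_natCast, xiPoly, coeff_eq,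
      expSubOneInv, exp_two_mul]
    field_simp
    ring
  simp only [W9]
  rw [prefactor_eq hy n 1, mul_assoc, hpoly, mul_assoc]; rfl

variable {x : ℝ} (hx : x ≠ 0) (φ : ℝ)
include hx

theorem isSeparatedNear_tau (n : ℤ) : IsSeparatedNear (W9 φ n).tau (-n) (tauProfile φ n) x :=
  (eventually_ne_nhds hx).mono fun _ hy t => tau_eq hy φ n t

theorem isSeparatedNear_xi (n : ℤ) : IsSeparatedNear (W9 φ n).xi (-n) (xiProfile φ n) x :=
  (eventually_ne_nhds hx).mono fun _ hy t => xi_eq hy φ n t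

theorem app_eq {F : ℝ → ℝ → ℝ} {b : ℝ} {h : ℝ → ℝ} (hF : IsSeparatedNear F b h x) (m : ℤ)
    (t : ℝ) : (W9 φ m).app F t x = exp (-m * t) * exp (b * t) *
      (b * tauProfile φ m x * h x + xiProfile φ m x * deriv h x) :=
  VF2.app_eq_of_isSeparatedNear (isSeparatedNear_tau hx φ m) (isSeparatedNear_xi hx φ m) hF t

theorem tauProfile_bracket (m n : ℤ) :
    (m - n) * tauProfile φ m x * tauProfile φ n x
      + xiProfile φ m x * deriv (tauProfile φ n) x - xiProfile φ n x * deriv (tauProfile φ m) x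
      = (m - n) * tauProfile φ (m + n) x := by
  have hr := expSubOneInv_add_one_ne_zero hx
  simp only [tauProfile, xiProfile]
  rw [(hasDerivAt_profile _ hx (hasDerivAt_tauPoly φ n _)).deriv,
    (hasDerivAt_profile _ hx (hasDerivAt_tauPoly φ m _)).deriv]
  simp only [profile, tauPoly, xiPoly, coeff]
  generalize expSubOneInv x = s at hr ⊢
  rw [show m + n - 1 = (m - 1) + (n - 1) + 1 by ring, zpow_add₀ hr, zpow_add₀ hr, zpow_one]
  push_cast
  ring

theorem xiProfile_bracket (m n : ℤ) :
    m * tauProfile φ n x * xiProfile φ m x - n * tauProfile φ m x * xiProfile φ n x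
      + xiProfile φ m x * deriv (xiProfile φ n) x - xiProfile φ n x * deriv (xiProfile φ m) x
      = (m - n) * xiProfile φ (m + n) x := by
  have hr := expSubOneInv_add_one_ne_zero hx
  simp only [tauProfile, xiProfile]
  rw [(hasDerivAt_profile _ hx (hasDerivAt_xiPoly φ n _)).deriv,
    (hasDerivAt_profile _ hx (hasDerivAt_xiPoly φ m _)).deriv]
  simp only [profile, tauPoly, xiPoly, coeff]
  generalize expSubOneInv x = s at hr ⊢
  rw [show m + n - 1 = (m - 1) + (n - 1) + 1 by ring, zpow_add₀ hr, zpow_add₀ hr, zpow_one]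
  push_cast
  ring

end W9

/-- Realization 𝔚₉ of the Witt algebra: on `Ω = {(t,x) : x ≠ 0}` one has
`[L m, L n] = (m - n) L (m + n)`. -/
theorem witt_realization_W9 (φ : ℝ) (m n : ℤ) (t x : ℝ) (hx : x ≠ 0) :
    (VF2.bracket (W9 φ m) (W9 φ n)).tau t x
      = ((m : ℝ) - (n : ℝ)) * (W9 φ (m + n)).tau t x ∧
    (VF2.bracket (W9 φ m) (W9 φ n)).xi t x
      = ((m : ℝ) - (n : ℝ)) * (W9 φ (m + n)).xi t x := by
  have hexp : exp (-((m + n : ℤ) : ℝ) * t) = exp (-m * t) * exp (-n * t) := by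
    rw [← exp_add]; push_cast; ring_nf
  simp only [VF2.bracket]
  rw [W9.app_eq hx φ (W9.isSeparatedNear_tau hx φ n),
    W9.app_eq hx φ (W9.isSeparatedNear_tau hx φ m),
    W9.app_eq hx φ (W9.isSeparatedNear_xi hx φ n),
    W9.app_eq hx φ (W9.isSeparatedNear_xi hx φ m),
    W9.tau_eq hx, W9.xi_eq hx, hexp]
  constructor
  · linear_combination exp (-m * t) * exp (-n * t) * W9.tauProfile_bracket hx φ m n
  · linear_combination exp (-m * t) * exp (-n * t) * W9.xiProfile_bracket hx φ m n
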